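/- Let s'' and s̃ be reals with 0 < s'' < s̃, and let d̃ : Σ^* → [0,∞) be a martingale. Suppose X ∈ Σ^∞ satisfies limsup_{n→∞} d̃(X↾n) / 2^{(1−s'')·n} = ∞. Then there exist infinitely many n ∈ ℕ satisfying at least one of the following: (1) d̃(X↾2^n) > 2^{(1−s̃)·2^{n−1}}·d̃(X↾2^{n−1}); (2) there exists ℓ ∈ ℕ with ((s̃−s'')/s'')·2^{n−1} ≤ ℓ ≤ 2^{n−1} such that d̃(X↾(2^{n−1}+ℓ)) > 2^{(1−s'')·(2^{n−1}+ℓ)}. -/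

import Mathlib

/-!
If both conditions fail for all large `n`, then the failure of (1) makes `d̃(X↾2^k)` grow at most like
`2^{(1-s̃)2^k}`. Write `m = 2^k + ℓ` with `ℓ < 2^k`. For large `ℓ` the failure of (2) bounds
`d̃(X↾m)` by `2^{(1-s'')m}` directly; for small `ℓ` the martingale can at most double at each of
the `ℓ` steps after `2^k`, and `ℓ ≤ ((s̃-s'')/s'')·2^k` is exactly what keeps
`2^ℓ · 2^{(1-s̃)2^k}` below `2^{(1-s'')m}`. So `d̃(X↾m) / 2^{(1-s'')m}` stays bounded.
-/

open Filter MeasureTheory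

/-- The first `n` bits of an infinite binary sequence, as a finite string. -/
def pre (X : ℕ → Bool) (n : ℕ) : List Bool := List.ofFn (fun i : Fin n => X i)

lemma pre_succ (X : ℕ → Bool) (m : ℕ) : pre X (m + 1) = pre X m ++ [X m] := by
  rw [pre, List.ofFn_succ', List.concat_eq_append]
  simp [pre]

lemma exists_eq_two_pow_add_of_two_pow_le {N m : ℕ} (hm : 2 ^ N ≤ m) :
    ∃ k ℓ : ℕ, N ≤ k ∧ ℓ < 2 ^ k ∧ m = 2 ^ k + ℓ := by
  have hm0 : m ≠ 0 := (Nat.two_pow_pos N).trans_le hm |>.ne'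
  have hlow := Nat.pow_log_le_self 2 hm0
  have hhigh := Nat.lt_pow_succ_log_self one_lt_two m
  refine ⟨Nat.log 2 m, m - 2 ^ Nat.log 2 m, Nat.le_log_of_pow_le one_lt_two hm, ?_, by omega⟩
  rw [pow_succ] at hhigh
  omega

lemma le_rpow_mul_of_le_rpow_mul_succ {f : ℕ → ℝ} {c : ℝ} {N : ℕ}
    (hf : ∀ n ≥ N, f (n + 1) ≤ 2 ^ (c * 2 ^ n) * f n) :
    ∀ n ≥ N, f n ≤ 2 ^ (c * 2 ^ n) * (f N / 2 ^ (c * 2 ^ N)) := by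
  intro n hn
  induction n, hn using Nat.le_induction with
  | base => rw [mul_div_cancel₀ _ (Real.rpow_pos_of_pos two_pos _).ne']
  | succ n hn ih =>
    calc f (n + 1) ≤ 2 ^ (c * 2 ^ n) * f n := hf n hn
      _ ≤ 2 ^ (c * 2 ^ n) * (2 ^ (c * 2 ^ n) * (f N / 2 ^ (c * 2 ^ N))) := by gcongr
      _ = 2 ^ (c * 2 ^ (n + 1)) * (f N / 2 ^ (c * 2 ^ N)) := by
        rw [← mul_assoc, ← Real.rpow_add two_pos, pow_succ]
        ring_nf

section Martingale

variable {d : List Bool → ℝ} (hnonneg : ∀ w, 0 ≤ d w)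
  (hmart : ∀ w, d (w ++ [false]) + d (w ++ [true]) = 2 * d w)
include hnonneg hmart

lemma martingale_append_singleton_le (w : List Bool) (b : Bool) : d (w ++ [b]) ≤ 2 * d w := by
  have h := hmart w
  have h0 := hnonneg (w ++ [false])
  have h1 := hnonneg (w ++ [true])
  cases b <;> linarith

lemma martingale_pre_add_le (X : ℕ → Bool) (m : ℕ) :
    ∀ k : ℕ, d (pre X (m + k)) ≤ 2 ^ k * d (pre X m)
  | 0 => by simp
  | k + 1 => by
    calc d (pre X (m + (k + 1))) ≤ 2 * d (pre X (m + k)) := by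
          rw [← add_assoc, pre_succ]
          exact martingale_append_singleton_le hnonneg hmart _ _
      _ ≤ 2 * (2 ^ k * d (pre X m)) := by
          gcongr
          exact martingale_pre_add_le X m k
      _ = 2 ^ (k + 1) * d (pre X m) := by ring

lemma martingale_pre_two_pow_add_le {X : ℕ → Bool} {s t B : ℝ} {k ℓ : ℕ} (hs : 0 < s)
    (hk : d (pre X (2 ^ k)) ≤ 2 ^ ((1 - t) * 2 ^ k) * B)
    (hlarge : (t - s) / s * 2 ^ k ≤ ℓ →
      d (pre X (2 ^ k + ℓ)) ≤ 2 ^ ((1 - s) * (2 ^ k + ℓ))) :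
    d (pre X (2 ^ k + ℓ)) ≤ max 1 B * 2 ^ ((1 - s) * (2 ^ k + ℓ)) := by
  have hpos : (0 : ℝ) < 2 ^ ((1 - s) * (2 ^ k + ℓ)) := Real.rpow_pos_of_pos two_pos _
  by_cases hℓ : (t - s) / s * 2 ^ k ≤ ℓ
  · exact (hlarge hℓ).trans (le_mul_of_one_le_left hpos.le (le_max_left _ _))
  have hB : 0 ≤ B :=
    nonneg_of_mul_nonneg_right ((hnonneg _).trans hk) (Real.rpow_pos_of_pos two_pos _)
  have hsmall : (ℓ : ℝ) * s < (t - s) * 2 ^ k := by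
    rw [not_le, div_mul_eq_mul_div, lt_div_iff₀ hs] at hℓ
    exact hℓ
  have hexp : (ℓ : ℝ) + (1 - t) * 2 ^ k ≤ (1 - s) * (2 ^ k + ℓ) := by linarith
  calc d (pre X (2 ^ k + ℓ)) ≤ 2 ^ ℓ * d (pre X (2 ^ k)) :=
        martingale_pre_add_le hnonneg hmart X _ ℓ
    _ ≤ 2 ^ (ℓ : ℝ) * (2 ^ ((1 - t) * 2 ^ k) * B) := by
        rw [Real.rpow_natCast]
        gcongr
    _ = 2 ^ ((ℓ : ℝ) + (1 - t) * 2 ^ k) * B := by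
        rw [Real.rpow_add two_pos, mul_assoc]
    _ ≤ 2 ^ ((1 - s) * (2 ^ k + ℓ)) * B := by
        gcongr
        norm_num
    _ ≤ max 1 B * 2 ^ ((1 - s) * (2 ^ k + ℓ)) := by
        rw [mul_comm]
        gcongr
        exact le_max_right _ _

end Martingale

theorem martingale_growth_dichotomy_general
    (s'' st : ℝ) (h0 : 0 < s'')
    (d : List Bool → ℝ) (hnonneg : ∀ w, 0 ≤ d w)
    (hmart : ∀ w, d (w ++ [false]) + d (w ++ [true]) = 2 * d w)
    (X : ℕ → Bool)
    (hX : ∀ C : ℝ, ∃ᶠ n in atTop, C < d (pre X n) / 2 ^ ((1 - s'') * (n : ℝ))) :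
    ∃ᶠ n : ℕ in atTop,
      (2 ^ ((1 - st) * (2 : ℝ) ^ (n - 1)) * d (pre X (2 ^ (n - 1))) < d (pre X (2 ^ n))) ∨
      (∃ ℓ : ℕ, ((st - s'') / s'') * (2 : ℝ) ^ (n - 1) ≤ (ℓ : ℝ) ∧ ℓ ≤ 2 ^ (n - 1) ∧
        2 ^ ((1 - s'') * ((2 : ℝ) ^ (n - 1) + (ℓ : ℝ))) < d (pre X (2 ^ (n - 1) + ℓ))) := by
  by_contra hcon
  obtain ⟨N, hN⟩ := eventually_atTop.mp
    ((tendsto_add_atTop_nat 1).eventually (not_frequently.mp hcon))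
  simp only [Nat.add_sub_cancel, not_or, not_lt, not_exists, not_and] at hN
  set B := d (pre X (2 ^ N)) / 2 ^ ((1 - st) * 2 ^ N)
  have hpow : ∀ k ≥ N, d (pre X (2 ^ k)) ≤ 2 ^ ((1 - st) * 2 ^ k) * B :=
    le_rpow_mul_of_le_rpow_mul_succ (f := fun k => d (pre X (2 ^ k)))
      fun n hn => (hN n hn).1
  have hbounded : ∀ᶠ m : ℕ in atTop, d (pre X m) / 2 ^ ((1 - s'') * (m : ℝ)) ≤ max 1 B := by
    filter_upwards [eventually_ge_atTop (2 ^ N)] with m hm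
    obtain ⟨k, ℓ, hk, hℓ, rfl⟩ := exists_eq_two_pow_add_of_two_pow_le hm
    rw [div_le_iff₀ (Real.rpow_pos_of_pos two_pos _)]
    push_cast
    exact martingale_pre_two_pow_add_le hnonneg hmart h0 (hpow k hk)
      fun hlarge => (hN k hk).2 ℓ hlarge hℓ.le
  obtain ⟨m, hlt, hle⟩ := ((hX (max 1 B)).and_eventually hbounded).exists
  exact hlt.not_ge hle

/-- If a martingale `d̃` satisfies `limsup d̃(X↾n)/2^{(1-s'')n} = ∞` with `0 < s'' < s̃`, then
infinitely many `n` satisfy condition (1) or condition (2). -/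
theorem martingale_growth_dichotomy
    (s'' st : ℝ) (h0 : 0 < s'') (hst : s'' < st)
    (d : List Bool → ℝ) (hnonneg : ∀ w, 0 ≤ d w)
    (hmart : ∀ w, d (w ++ [false]) + d (w ++ [true]) = 2 * d w)
    (X : ℕ → Bool)
    (hX : ∀ C : ℝ, ∃ᶠ n in atTop, C < d (pre X n) / 2 ^ ((1 - s'') * (n : ℝ))) :
    ∃ᶠ n : ℕ in atTop,
      (2 ^ ((1 - st) * (2 : ℝ) ^ (n - 1)) * d (pre X (2 ^ (n - 1))) < d (pre X (2 ^ n))) ∨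
      (∃ ℓ : ℕ, ((st - s'') / s'') * (2 : ℝ) ^ (n - 1) ≤ (ℓ : ℝ) ∧ ℓ ≤ 2 ^ (n - 1) ∧
        2 ^ ((1 - s'') * ((2 : ℝ) ^ (n - 1) + (ℓ : ℝ))) < d (pre X (2 ^ (n - 1) + ℓ))) :=
  martingale_growth_dichotomy_general s'' st h0 d hnonneg hmart X hX
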